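/- Let ψ be a negative psh function on a neighborhood of the unit ball in ℂ^n, ρ > 0 small, z in the unit ball, and x ∈ B(z, ρ^4). Then ψ'(x) := sup_{B(x,ρ^4)} ψ satisfies ψ'(x) ≤ (1 − cρ) · (n! π^{-n} ρ^{-4n}) ∫_{B(z,ρ^2)} ψ dZ for some constant c > 0 independent of x, z and ρ (for ρ small enough). -/

import Mathlib

open MeasureTheory Metric

/-- `ℂ^n` as a Euclidean space (with its Lebesgue measure). -/
abbrev Cn (n : ℕ) := EuclideanSpace ℂ (Fin n)

/-- Lebesgue measure on `ℂ^n`, via its real inner-product space structure. -/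
noncomputable instance (n : ℕ) : MeasureTheory.MeasureSpace (Cn n) :=
  letI : InnerProductSpace ℝ (Cn n) := InnerProductSpace.rclikeToReal ℂ _
  letI : MeasurableSpace (Cn n) := borel _
  haveI : BorelSpace (Cn n) := ⟨rfl⟩
  measureSpaceOfInnerProductSpace

/-- Send `x ∈ [0,∞] ⊆ EReal` to `ℝ≥0∞` (junk on negatives). -/
noncomputable def erealToENNReal (x : EReal) : ENNReal :=
  if x = ⊤ then ⊤ else ENNReal.ofReal x.toReal

/-- A negative plurisubharmonic function on `U ⊆ ℂ^n`, with values in `[-∞, 0)`: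
upper semicontinuous, negative, and satisfying the sub-mean value inequality on every
complex circle contained in `U` (written for `-u ≥ 0` via lower integrals). -/
def NegPSHOn {n : ℕ} (u : Cn n → EReal) (U : Set (Cn n)) : Prop :=
  UpperSemicontinuousOn u U ∧ (∀ z ∈ U, u z < 0) ∧
    ∀ z ∈ U, ∀ v : Cn n, ∀ r : ℝ, 0 < r →
      (∀ θ : ℝ, z + ((r : ℂ) * Complex.exp (θ * Complex.I)) • v ∈ U) →
      (∫⁻ θ in Set.Ioc (0 : ℝ) (2 * Real.pi),
          erealToENNReal (-(u (z + ((r : ℂ) * Complex.exp (θ * Complex.I)) • v))))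
        ≤ ENNReal.ofReal (2 * Real.pi) * erealToENNReal (-(u z))

/-- The sup-regularization `ψ'(z) = sup_{B(z,ρ⁴) ∩ U} ψ`. -/
noncomputable def supReg {n : ℕ} (u : Cn n → EReal) (U : Set (Cn n)) (ρ : ℝ)
    (z : Cn n) : EReal :=
  sSup (u '' (closedBall z (ρ ^ 4) ∩ U))

/-! Let `y` be any point of `B(x, ρ⁴)`. Then `|z - y| ≤ 2ρ⁴`, so `B(z, ρ²) ⊆ B(y, R)` with
`R = ρ² + 2ρ⁴`, and the sub-mean value inequality on `B(y, R)` gives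
`∫_{B(z,ρ²)} (-ψ) ≤ vol B(y, R) · (-ψ(y))`. That inequality comes from the one on complex
circles by averaging over the rotations `w ↦ e^{iθ} w` of `B(0, R)`, which preserve Lebesgue
measure. Instead of moving `y` to `z` by an automorphism, enlarging the ball costs only the
factor `(R / ρ²)^{2n} = (1 + 2ρ²)^{2n} ≤ e^ρ ≤ 1 / (1 - ρ)` once `4nρ ≤ 1`, so `c = 1` works.
Taking the infimum over `y` bounds `-ψ'(x)`. -/

-- These agree definitionally with the structures from which `volume` on `Cn n` is built.
noncomputable instance (n : ℕ) : InnerProductSpace ℝ (Cn n) :=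
  InnerProductSpace.rclikeToReal ℂ _

noncomputable instance (n : ℕ) : MeasurableSpace (Cn n) := borel (Cn n)

instance (n : ℕ) : BorelSpace (Cn n) := ⟨rfl⟩

open scoped ENNReal

-- `erealToENNReal` is `EReal.toENNReal` by definition.
lemma continuous_erealToENNReal_neg : Continuous fun x : EReal => erealToENNReal (-x) :=
  EReal.continuous_toENNReal.comp continuous_neg

lemma antitone_erealToENNReal_neg : Antitone fun x : EReal => erealToENNReal (-x) :=
  fun _ _ h => EReal.toENNReal_le_toENNReal (EReal.neg_le_neg_iff.2 h)

lemma erealToENNReal_neg_sSup (T : Set EReal) :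
    erealToENNReal (-(sSup T)) = sInf ((fun t => erealToENNReal (-t)) '' T) :=
  antitone_erealToENNReal_neg.map_sSup_of_continuousAt
    continuous_erealToENNReal_neg.continuousAt rfl

lemma LowerSemicontinuousOn.lowerSemicontinuous_indicator {α : Type*} [TopologicalSpace α]
    {U : Set α} {f : α → ℝ≥0∞} (hf : LowerSemicontinuousOn f U) (hU : IsOpen U) :
    LowerSemicontinuous (U.indicator f) := by
  intro x y hy
  by_cases hx : x ∈ U
  · rw [Set.indicator_of_mem hx] at hy
    have hfx := hf x hx y hy
    rw [nhdsWithin_eq_nhds.2 (hU.mem_nhds hx)] at hfx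
    filter_upwards [hfx, hU.mem_nhds hx] with w hw hwU
    rwa [Set.indicator_of_mem hwU]
  · simp [Set.indicator_of_notMem hx] at hy

lemma measurable_indicator_erealToENNReal_neg {α : Type*} [TopologicalSpace α]
    [MeasurableSpace α] [OpensMeasurableSpace α] {U : Set α} {u : α → EReal}
    (hU : IsOpen U) (hu : UpperSemicontinuousOn u U) :
    Measurable (U.indicator fun w => erealToENNReal (-(u w))) :=
  ((continuous_erealToENNReal_neg.comp_upperSemicontinuousOn_antitone hu
    antitone_erealToENNReal_neg).lowerSemicontinuous_indicator hU).measurable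

lemma Cn.measurePreserving_smul {n : ℕ} {c : ℂ} (hc : ‖c‖ = 1) :
    MeasurePreserving (fun w : Cn n => c • w) :=
  let e : Cn n ≃ₗᵢ[ℝ] Cn n :=
    { (LinearEquiv.smulOfNeZero ℂ (Cn n) c
        (norm_ne_zero_iff.1 (hc ▸ one_ne_zero))).restrictScalars ℝ with
      norm_map' := fun w => by simp [norm_smul, hc] }
  e.measurePreserving

lemma Cn.setLIntegral_ball_comp_add_smul {n : ℕ} {f : Cn n → ℝ≥0∞} (hf : Measurable f)
    (y : Cn n) {c : ℂ} (hc : ‖c‖ = 1) (R : ℝ) :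
    ∫⁻ w in ball 0 R, f (y + c • w) = ∫⁻ w in ball y R, f w := by
  have hmp : MeasurePreserving (fun w : Cn n => y + c • w) :=
    (measurePreserving_add_left volume y).comp (Cn.measurePreserving_smul hc)
  have hpre : (fun w : Cn n => y + c • w) ⁻¹' ball y R = ball 0 R := by
    ext w; simp [dist_eq_norm, norm_smul, hc]
  rw [← hpre, hmp.setLIntegral_comp_preimage measurableSet_ball hf]

lemma Cn.finrank_real (n : ℕ) : Module.finrank ℝ (Cn n) = 2 * n := by
  rw [← Module.finrank_mul_finrank ℝ ℂ (Cn n), Complex.finrank_real_complex,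
    finrank_euclideanSpace_fin]

lemma Cn.volume_ball_le {n : ℕ} (y : Cn n) (R : ℝ) :
    volume (ball y R) ≤
      ENNReal.ofReal R ^ (2 * n) * ENNReal.ofReal (Real.pi ^ n / n.factorial) := by
  rcases Nat.eq_zero_or_pos n with rfl | hn
  · have : Subsingleton (Cn 0) := Module.finrank_zero_iff.1 (Cn.finrank_real 0)
    have huniv : parallelepiped (stdOrthonormalBasis ℝ (Cn 0)) = Set.univ :=
      Set.eq_univ_of_forall fun w =>
        (mem_parallelepiped_iff _ _).2 ⟨0, by simp, Subsingleton.elim _ _⟩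
    calc volume (ball y R) ≤ volume (Set.univ : Set (Cn 0)) := measure_mono (Set.subset_univ _)
      _ = 1 := huniv ▸ (stdOrthonormalBasis ℝ (Cn 0)).volume_parallelepiped
      _ = _ := by simp
  · have : Nontrivial (Cn n) :=
      Module.nontrivial_of_finrank_pos (R := ℝ) (by rw [Cn.finrank_real]; omega)
    rw [InnerProductSpace.volume_ball_of_dim_even (Cn.finrank_real n), Cn.finrank_real]

theorem NegPSHOn.setLIntegral_ball_le {n : ℕ} {U : Set (Cn n)} {u : Cn n → EReal}
    (hu : NegPSHOn u U) (hU : IsOpen U) {y : Cn n} {R : ℝ} (hy : y ∈ U)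
    (hyR : closedBall y R ⊆ U) :
    ∫⁻ w in ball y R, erealToENNReal (-(u w)) ≤ volume (ball y R) * erealToENNReal (-(u y)) := by
  set g := U.indicator fun w => erealToENNReal (-(u w))
  have hg : Measurable g := measurable_indicator_erealToENNReal_neg hU hu.1
  have hgU : ∀ w ∈ U, g w = erealToENNReal (-(u w)) := fun w hw => Set.indicator_of_mem hw _
  -- the radius `1` spelled as in the circles of `NegPSHOn`
  set c : ℝ → ℂ := fun θ => ((1 : ℝ) : ℂ) * Complex.exp (θ * Complex.I)
  have hc : ∀ θ, ‖c θ‖ = 1 := fun θ => by simp [c, Complex.norm_exp_ofReal_mul_I]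
  have hcircle : ∀ w ∈ ball (0 : Cn n) R,
      ∫⁻ θ in Set.Ioc 0 (2 * Real.pi), g (y + c θ • w) ≤ ENNReal.ofReal (2 * Real.pi) * g y := by
    intro w hw
    have hmem : ∀ θ : ℝ, y + c θ • w ∈ U := fun θ => hyR <| by
      simpa [dist_eq_norm, norm_smul, hc] using (mem_ball_zero_iff.1 hw).le
    rw [lintegral_congr fun θ => hgU _ (hmem θ), hgU y hy]
    exact hu.2.2 y hy w 1 one_pos hmem
  have hmeas : Measurable fun p : ℝ × Cn n => g (y + c p.1 • p.2) :=
    hg.comp (by fun_prop)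
  have hvol : ENNReal.ofReal (2 * Real.pi) ≠ 0 := (ENNReal.ofReal_pos.2 Real.two_pi_pos).ne'
  rw [← ENNReal.mul_le_mul_iff_right hvol ENNReal.ofReal_ne_top]
  calc ENNReal.ofReal (2 * Real.pi) * ∫⁻ w in ball y R, erealToENNReal (-(u w))
      = ∫⁻ θ in Set.Ioc 0 (2 * Real.pi), ∫⁻ w in ball 0 R, g (y + c θ • w) := by
        simp only [Cn.setLIntegral_ball_comp_add_smul hg y (hc _), setLIntegral_const,
          Real.volume_Ioc, sub_zero]
        rw [mul_comm]
        refine congrArg (· * _) (setLIntegral_congr_fun measurableSet_ball fun w hw => ?_)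
        exact (hgU w (hyR (ball_subset_closedBall hw))).symm
    _ = ∫⁻ w in ball 0 R, ∫⁻ θ in Set.Ioc 0 (2 * Real.pi), g (y + c θ • w) :=
        lintegral_lintegral_swap hmeas.aemeasurable
    _ ≤ ∫⁻ w in ball 0 R, ENNReal.ofReal (2 * Real.pi) * g y :=
        setLIntegral_mono measurable_const hcircle
    _ = ENNReal.ofReal (2 * Real.pi) * (volume (ball y R) * erealToENNReal (-(u y))) := by
        rw [setLIntegral_const, hgU y hy, Measure.addHaar_ball_center volume y]
        ring

lemma one_sub_mul_one_add_two_mul_sq_pow_le_one {ρ : ℝ} {n : ℕ} (hρ : 0 ≤ ρ)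
    (hnρ : (4 * n + 1) * ρ ≤ 1) : (1 - ρ) * (1 + 2 * ρ ^ 2) ^ (2 * n) ≤ 1 := by
  have hpow : (1 + 2 * ρ ^ 2) ^ (2 * n) ≤ Real.exp ρ :=
    calc (1 + 2 * ρ ^ 2) ^ (2 * n) ≤ Real.exp (2 * ρ ^ 2) ^ (2 * n) := by
          gcongr; linarith [Real.add_one_le_exp (2 * ρ ^ 2)]
      _ = Real.exp ((2 * n : ℕ) * (2 * ρ ^ 2)) := (Real.exp_nat_mul _ _).symm
      _ ≤ Real.exp ρ := Real.exp_le_exp.2 (by push_cast; nlinarith)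
  have hexp : (1 - ρ) * Real.exp ρ ≤ 1 := by
    have := mul_le_mul_of_nonneg_right (Real.add_one_le_exp (-ρ)) (Real.exp_pos ρ).le
    rwa [← Real.exp_add, neg_add_cancel, Real.exp_zero, neg_add_eq_sub] at this
  calc (1 - ρ) * (1 + 2 * ρ ^ 2) ^ (2 * n) ≤ (1 - ρ) * Real.exp ρ := by
        gcongr; nlinarith
    _ ≤ 1 := hexp

lemma Cn.ofReal_mul_volume_ball_le_one {n : ℕ} {ρ : ℝ} (hρ : 0 < ρ)
    (hnρ : (4 * n + 1) * ρ ≤ 1) (y : Cn n) :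
    ENNReal.ofReal ((1 - ρ) * n.factorial / (Real.pi ^ n * ρ ^ (4 * n))) *
      volume (ball y (ρ ^ 2 + 2 * ρ ^ 4)) ≤ 1 := by
  have hρ1 : 0 ≤ 1 - ρ := by nlinarith
  have hR : ρ ^ 2 + 2 * ρ ^ 4 = ρ ^ 2 * (1 + 2 * ρ ^ 2) := by ring
  calc _ ≤ ENNReal.ofReal ((1 - ρ) * n.factorial / (Real.pi ^ n * ρ ^ (4 * n))) *
        (ENNReal.ofReal (ρ ^ 2 + 2 * ρ ^ 4) ^ (2 * n) *
          ENNReal.ofReal (Real.pi ^ n / n.factorial)) := by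
        gcongr; exact Cn.volume_ball_le y _
    _ = ENNReal.ofReal ((1 - ρ) * (1 + 2 * ρ ^ 2) ^ (2 * n)) := by
        rw [← ENNReal.ofReal_pow (by positivity), ← ENNReal.ofReal_mul (by positivity),
          ← ENNReal.ofReal_mul (by positivity)]
        congr 1
        rw [hR, mul_pow, ← pow_mul, show 2 * (2 * n) = 4 * n by ring]
        field_simp
    _ ≤ 1 := ENNReal.ofReal_le_one.2 (one_sub_mul_one_add_two_mul_sq_pow_le_one hρ.le hnρ)

theorem NegPSHOn.ofReal_mul_setLIntegral_ball_le {n : ℕ} {U : Set (Cn n)} {u : Cn n → EReal}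
    (hu : NegPSHOn u U) (hU : IsOpen U) {ρ : ℝ} (hρ : 0 < ρ) (hnρ : (4 * n + 1) * ρ ≤ 1)
    {y z : Cn n} (hy : y ∈ U) (hyR : closedBall y (ρ ^ 2 + 2 * ρ ^ 4) ⊆ U)
    (hzy : dist z y ≤ 2 * ρ ^ 4) :
    ENNReal.ofReal ((1 - ρ) * n.factorial / (Real.pi ^ n * ρ ^ (4 * n))) *
        ∫⁻ w in ball z (ρ ^ 2), erealToENNReal (-(u w))
      ≤ erealToENNReal (-(u y)) :=
  calc _ ≤ ENNReal.ofReal ((1 - ρ) * n.factorial / (Real.pi ^ n * ρ ^ (4 * n))) *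
        ∫⁻ w in ball y (ρ ^ 2 + 2 * ρ ^ 4), erealToENNReal (-(u w)) := by
        gcongr
        exact ball_subset_ball' (by linarith)
    _ ≤ ENNReal.ofReal ((1 - ρ) * n.factorial / (Real.pi ^ n * ρ ^ (4 * n))) *
        (volume (ball y (ρ ^ 2 + 2 * ρ ^ 4)) * erealToENNReal (-(u y))) := by
        gcongr
        exact hu.setLIntegral_ball_le hU hy hyR
    _ ≤ 1 * erealToENNReal (-(u y)) := by
        rw [← mul_assoc]
        gcongr
        exact Cn.ofReal_mul_volume_ball_le_one hρ hnρ y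
    _ = erealToENNReal (-(u y)) := one_mul _

/-- Let `ψ` be a negative psh function on a neighborhood of the closed unit ball of `ℂ^n`
and `ψ'(x) := sup_{B(x,ρ⁴)} ψ`.  Then there is `c > 0` such that for all sufficiently
small `ρ > 0`, every `z` in the unit ball and every `x ∈ B(z,ρ⁴)`,
`ψ'(x) ≤ (1 − cρ) · (n! π^{-n} ρ^{-4n}) ∫_{B(z,ρ²)} ψ dZ`; equivalently, multiplying by
`−1`, `(1 − cρ) · n!/(π^n ρ^{4n}) · ∫_{B(z,ρ²)} (−ψ) dZ ≤ −ψ'(x)`. -/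
theorem stmt_4 {n : ℕ} (U : Set (Cn n)) (hU : IsOpen U)
    (hball : closedBall (0 : Cn n) 1 ⊆ U)
    (u : Cn n → EReal) (hu : NegPSHOn u U) :
    ∃ c : ℝ, 0 < c ∧ ∃ ρ₀ : ℝ, 0 < ρ₀ ∧ ∀ ρ : ℝ, 0 < ρ → ρ ≤ ρ₀ →
      ∀ z ∈ closedBall (0 : Cn n) 1, ∀ x ∈ closedBall z (ρ ^ 4),
        ENNReal.ofReal ((1 - c * ρ) * (Nat.factorial n : ℝ) /
            (Real.pi ^ n * ρ ^ (4 * n))) *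
          (∫⁻ w in ball z (ρ ^ 2), erealToENNReal (-(u w)))
            ≤ erealToENNReal (-(supReg u U ρ x)) := by
  obtain ⟨ε, hε, hεU⟩ : ∃ ε > 0, closedBall (0 : Cn n) (1 + ε) ⊆ U := by
    obtain ⟨ε, hε, hsub⟩ := (isCompact_closedBall 0 1).exists_cthickening_subset_open hU hball
    exact ⟨ε, hε, by rwa [add_comm, ← cthickening_closedBall hε.le zero_le_one]⟩
  refine ⟨1, one_pos, min (1 / (4 * n + 1)) (ε / 5), by positivity, ?_⟩
  intro ρ hρ hρ₀ z hz x hx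
  have hnρ : (4 * n + 1) * ρ ≤ 1 := by
    have := (le_min_iff.1 hρ₀).1
    rwa [le_div_iff₀ (by positivity), mul_comm] at this
  have hρε : 5 * ρ ≤ ε := by linarith [(le_min_iff.1 hρ₀).2]
  have hρ1 : ρ ≤ 1 := by nlinarith [(Nat.cast_nonneg n : (0 : ℝ) ≤ n)]
  rw [supReg, erealToENNReal_neg_sSup, one_mul]
  refine le_sInf ?_
  rintro _ ⟨_, ⟨y, ⟨hyx, hyU⟩, rfl⟩, rfl⟩
  have hzy : dist z y ≤ 2 * ρ ^ 4 := by
    linarith [dist_triangle z x y, mem_closedBall'.1 hx, mem_closedBall'.1 hyx]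
  refine hu.ofReal_mul_setLIntegral_ball_le hU hρ hnρ hyU
    ((closedBall_subset_closedBall' ?_).trans hεU) hzy
  have hy0 : dist y 0 ≤ 1 + 2 * ρ ^ 4 := by
    linarith [dist_triangle y z 0, mem_closedBall.1 hz, dist_comm z y]
  nlinarith [pow_le_one₀ hρ.le hρ1 (n := 2)]
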